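/- Let N ≥ 1, X a real Hilbert space, C ⊆ X a convex subset, T_1,…,T_N : C → C nonexpansive mappings extended cyclically by T_n := T_{((n−1) mod N)+1}, and (λ_n)_{n≥1} a sequence in [0,1] satisfying lim_{n→∞} λ_n = 0, ∑_{n=1}^∞ |λ_{n+N} − λ_n| < ∞ and ∑_{n=1}^∞ λ_n = ∞. Let u ∈ C and (x_n) be the cyclic Halpern iteration x_0 = u, x_{n+1} = λ_{n+1}·u + (1 − λ_{n+1})·T_{n+1}x_n, and assume (x_n) is bounded. Then lim_{n→∞} ‖x_n − T_{n+N}T_{n+N−1}⋯T_{n+1}x_n‖ = 0. -/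

import Mathlib

/-!
Put `a n = ‖x (n + N) - x n‖`. Because `T (n + 1 + N) = T (n + 1)`, the two iterations giving
`x (n + 1 + N)` and `x (n + 1)` apply the same nonexpansive map, so
`a (n + 1) ≤ (1 - λ (n + 1 + N)) a n + M |λ (n + 1 + N) - λ (n + 1)|`, where `M` bounds
`‖u - T (n + 1) (x n)‖`; Xu's lemma on such recursive inequalities gives `a n → 0`.
On the other hand, following the `N` iteration steps from `x n` alongside the `N` maps
`T (n + 1), …, T (n + N)` gives `‖x (n + N) - T (n + N) ⋯ T (n + 1) (x n)‖ ≤ M ∑ λ (n + j + 1)`,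
which tends to `0` since `λ n → 0`.
-/

/-- `iterComp T n N z` is the composition `T (n+N) (T (n+N-1) (⋯ (T (n+1) z)))`. -/
def iterComp {Y : Type*} (T : ℕ → Y → Y) (n : ℕ) : ℕ → Y → Y
  | 0, z => z
  | (k + 1), z => T (n + k + 1) (iterComp T n k z)

open Filter Finset Topology

section Xu

variable {a α c : ℕ → ℝ}

theorem le_exp_neg_sum_mul_add_sum (ha : ∀ n, 0 ≤ a n) (hα : ∀ n, α n ∈ Set.Icc (0 : ℝ) 1)
    (hc : ∀ n, 0 ≤ c n) (hrec : ∀ n, a (n + 1) ≤ (1 - α n) * a n + c n) (m n : ℕ) :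
    a (n + m) ≤ Real.exp (-∑ k ∈ range n, α (k + m)) * a m + ∑ k ∈ range n, c (k + m) := by
  induction n with
  | zero => simp
  | succ n ih =>
    have hE : 0 ≤ Real.exp (-∑ k ∈ range n, α (k + m)) * a m :=
      mul_nonneg (Real.exp_pos _).le (ha m)
    have hS : 0 ≤ ∑ k ∈ range n, c (k + m) := sum_nonneg fun k _ => hc _
    have hα0 := (hα (n + m)).1
    have hexp : 1 - α (n + m) ≤ Real.exp (-α (n + m)) := by
      linarith [Real.add_one_le_exp (-α (n + m))]
    calc a (n + 1 + m) = a (n + m + 1) := by rw [Nat.add_right_comm]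
      _ ≤ (1 - α (n + m)) * (Real.exp (-∑ k ∈ range n, α (k + m)) * a m
            + ∑ k ∈ range n, c (k + m)) + c (n + m) :=
        (hrec _).trans (by gcongr; linarith [(hα (n + m)).2])
      _ ≤ Real.exp (-α (n + m)) * (Real.exp (-∑ k ∈ range n, α (k + m)) * a m)
            + ∑ k ∈ range n, c (k + m) + c (n + m) := by
        nlinarith [mul_le_mul_of_nonneg_right hexp hE]
      _ = _ := by rw [sum_range_succ, sum_range_succ, neg_add, Real.exp_add]; ring

theorem tendsto_zero_of_le_one_sub_mul_add (ha : ∀ n, 0 ≤ a n)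
    (hα : ∀ n, α n ∈ Set.Icc (0 : ℝ) 1) (hc : ∀ n, 0 ≤ c n)
    (hrec : ∀ n, a (n + 1) ≤ (1 - α n) * a n + c n) (hcs : Summable c) (hαs : ¬Summable α) :
    Tendsto a atTop (𝓝 0) := by
  refine tendsto_order.2 ⟨fun b hb => .of_forall fun n => hb.trans_le (ha n), fun ε hε => ?_⟩
  obtain ⟨m, hm⟩ := ((tendsto_sum_nat_add c).eventually (gt_mem_nhds (half_pos hε))).exists
  have hdiv : Tendsto (fun n => ∑ k ∈ range n, α (k + m)) atTop atTop :=
    (not_summable_iff_tendsto_nat_atTop_of_nonneg fun k => (hα _).1).1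
      (by rwa [summable_nat_add_iff])
  have hexp : Tendsto (fun n => Real.exp (-∑ k ∈ range n, α (k + m)) * a m) atTop (𝓝 0) := by
    simpa using (Real.tendsto_exp_atBot.comp (tendsto_neg_atTop_atBot.comp hdiv)).mul_const (a m)
  rw [← map_add_atTop_eq_nat m, eventually_map]
  filter_upwards [hexp.eventually (gt_mem_nhds (half_pos hε))] with n hn
  have htail : ∑ k ∈ range n, c (k + m) ≤ ∑' k, c (k + m) :=
    ((summable_nat_add_iff m).2 hcs).sum_le_tsum _ fun k _ => hc _
  linarith [le_exp_neg_sum_mul_add_sum ha hα hc hrec m n]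

end Xu

theorem finite_range_of_eq_mod {α : Type*} {f : ℕ → α} {N : ℕ} (hN : 0 < N)
    (hf : ∀ n, f n = f (n % N)) : (Set.range f).Finite :=
  ((Set.finite_Iio N).image f).subset <| Set.range_subset_iff.2 fun n =>
    ⟨n % N, Nat.mod_lt n hN, (hf n).symm⟩

theorem mapsTo_iterComp {Y : Type*} {T : ℕ → Y → Y} {C : Set Y}
    (hT : ∀ n, Set.MapsTo (T (n + 1)) C C) (n k : ℕ) : Set.MapsTo (iterComp T n k) C C := by
  induction k with
  | zero => exact Set.mapsTo_id C
  | succ k ih => exact (hT (n + k)).comp ih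

section Halpern

variable {X : Type*} [NormedAddCommGroup X] {C : Set X} {u : X} {T : ℕ → X → X} {x : ℕ → X}

theorem exists_norm_sub_map_halpern_le (hu : u ∈ C) (hmem : ∀ n, x n ∈ C)
    (hTne : ∀ n, ∀ y ∈ C, ∀ z ∈ C, ‖T (n + 1) y - T (n + 1) z‖ ≤ ‖y - z‖)
    (hTu : Bornology.IsBounded (Set.range fun n => T (n + 1) u))
    (hbdd : Bornology.IsBounded (Set.range x)) : ∃ M, ∀ n, ‖u - T (n + 1) (x n)‖ ≤ M := by
  obtain ⟨r, hr⟩ := hTu.exists_norm_le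
  obtain ⟨s, hs⟩ := hbdd.exists_norm_le
  refine ⟨‖u‖ + r + (‖u‖ + s), fun n => ?_⟩
  calc ‖u - T (n + 1) (x n)‖ ≤ ‖u - T (n + 1) u‖ + ‖T (n + 1) u - T (n + 1) (x n)‖ :=
        norm_sub_le_norm_sub_add_norm_sub _ _ _
    _ ≤ (‖u‖ + ‖T (n + 1) u‖) + (‖u‖ + ‖x n‖) :=
        add_le_add (norm_sub_le _ _) ((hTne n u hu _ (hmem n)).trans (norm_sub_le _ _))
    _ ≤ ‖u‖ + r + (‖u‖ + s) := by grw [hr _ ⟨n, rfl⟩, hs _ ⟨n, rfl⟩]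

variable [NormedSpace ℝ X]

theorem norm_halpern_step_sub_map_le {S : X → X}
    (hS : ∀ y ∈ C, ∀ z ∈ C, ‖S y - S z‖ ≤ ‖y - z‖) {t : ℝ} (ht : 0 ≤ t) {p q : X}
    (hp : p ∈ C) (hq : q ∈ C) :
    ‖t • u + (1 - t) • S p - S q‖ ≤ t * ‖u - S p‖ + ‖p - q‖ := by
  calc ‖t • u + (1 - t) • S p - S q‖ = ‖t • (u - S p) + (S p - S q)‖ := by congr 1; module
    _ ≤ t * ‖u - S p‖ + ‖p - q‖ := by
      grw [norm_add_le, norm_smul, Real.norm_of_nonneg ht, hS p hp q hq]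

theorem norm_halpern_step_sub_halpern_step_le {S : X → X}
    (hS : ∀ y ∈ C, ∀ z ∈ C, ‖S y - S z‖ ≤ ‖y - z‖) {s t : ℝ} (hs : s ≤ 1) {p q : X}
    (hp : p ∈ C) (hq : q ∈ C) :
    ‖s • u + (1 - s) • S p - (t • u + (1 - t) • S q)‖
      ≤ (1 - s) * ‖p - q‖ + |s - t| * ‖u - S q‖ := by
  calc ‖s • u + (1 - s) • S p - (t • u + (1 - t) • S q)‖
        = ‖(1 - s) • (S p - S q) + (s - t) • (u - S q)‖ := by congr 1; module
    _ ≤ (1 - s) * ‖p - q‖ + |s - t| * ‖u - S q‖ := by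
      grw [norm_add_le, norm_smul, norm_smul, Real.norm_of_nonneg (sub_nonneg.2 hs),
        Real.norm_eq_abs, hS p hp q hq]
      exact sub_nonneg.2 hs

variable {lam : ℕ → ℝ}

theorem halpern_mem (hC : Convex ℝ C) (hu : u ∈ C) (hTmap : ∀ n, Set.MapsTo (T (n + 1)) C C)
    (hlam : ∀ n, lam (n + 1) ∈ Set.Icc (0 : ℝ) 1) (hx0 : x 0 = u)
    (hx : ∀ n, x (n + 1) = lam (n + 1) • u + (1 - lam (n + 1)) • T (n + 1) (x n)) (n : ℕ) :
    x n ∈ C := by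
  induction n with
  | zero => rwa [hx0]
  | succ n ih =>
    rw [hx n]
    exact hC hu (hTmap n ih) (hlam n).1 (sub_nonneg.2 (hlam n).2) (add_sub_cancel _ _)

theorem norm_halpern_sub_iterComp_le {M : ℝ} (hmem : ∀ n, x n ∈ C)
    (hTmap : ∀ n, Set.MapsTo (T (n + 1)) C C)
    (hTne : ∀ n, ∀ y ∈ C, ∀ z ∈ C, ‖T (n + 1) y - T (n + 1) z‖ ≤ ‖y - z‖)
    (hlam : ∀ n, 0 ≤ lam (n + 1)) (hM : ∀ n, ‖u - T (n + 1) (x n)‖ ≤ M)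
    (hx : ∀ n, x (n + 1) = lam (n + 1) • u + (1 - lam (n + 1)) • T (n + 1) (x n)) (n k : ℕ) :
    ‖x (n + k) - iterComp T n k (x n)‖ ≤ M * ∑ j ∈ range k, lam (n + j + 1) := by
  induction k with
  | zero => simp [iterComp]
  | succ k ih =>
    calc ‖x (n + k + 1) - T (n + k + 1) (iterComp T n k (x n))‖
        ≤ lam (n + k + 1) * ‖u - T (n + k + 1) (x (n + k))‖
            + ‖x (n + k) - iterComp T n k (x n)‖ := by
          rw [hx]
          exact norm_halpern_step_sub_map_le (hTne _) (hlam _) (hmem _)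
            (mapsTo_iterComp hTmap n k (hmem n))
      _ ≤ lam (n + k + 1) * M + M * ∑ j ∈ range k, lam (n + j + 1) := by
          grw [hM (n + k), ih]
          exact hlam _
      _ = M * ∑ j ∈ range (k + 1), lam (n + j + 1) := by rw [sum_range_succ]; ring

theorem tendsto_norm_halpern_add_sub {N : ℕ} {M : ℝ} (hmem : ∀ n, x n ∈ C)
    (hTne : ∀ n, ∀ y ∈ C, ∀ z ∈ C, ‖T (n + 1) y - T (n + 1) z‖ ≤ ‖y - z‖)
    (hper : ∀ n, T (n + N + 1) = T (n + 1)) (hlam : ∀ n, lam (n + 1) ∈ Set.Icc (0 : ℝ) 1)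
    (hM : ∀ n, ‖u - T (n + 1) (x n)‖ ≤ M)
    (hsum : Summable fun n => |lam (n + N + 1) - lam (n + 1)|)
    (hdiv : ¬Summable fun n => lam (n + 1))
    (hx : ∀ n, x (n + 1) = lam (n + 1) • u + (1 - lam (n + 1)) • T (n + 1) (x n)) :
    Tendsto (fun n => ‖x (n + N) - x n‖) atTop (𝓝 0) := by
  have hM0 : 0 ≤ M := (norm_nonneg _).trans (hM 0)
  refine tendsto_zero_of_le_one_sub_mul_add (α := fun n => lam (n + N + 1))
    (c := fun n => |lam (n + N + 1) - lam (n + 1)| * M) (fun n => norm_nonneg _)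
    (fun n => hlam (n + N)) (fun n => by positivity) (fun n => ?_) (hsum.mul_right M)
    (by rwa [summable_nat_add_iff N (f := fun n => lam (n + 1))])
  calc ‖x (n + 1 + N) - x (n + 1)‖
      = ‖lam (n + N + 1) • u + (1 - lam (n + N + 1)) • T (n + 1) (x (n + N))
          - (lam (n + 1) • u + (1 - lam (n + 1)) • T (n + 1) (x n))‖ := by
        rw [Nat.add_right_comm, hx, hx, hper]
    _ ≤ (1 - lam (n + N + 1)) * ‖x (n + N) - x n‖
          + |lam (n + N + 1) - lam (n + 1)| * ‖u - T (n + 1) (x n)‖ :=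
        norm_halpern_step_sub_halpern_step_le (hTne n) (hlam (n + N)).2 (hmem _) (hmem n)
    _ ≤ (1 - lam (n + N + 1)) * ‖x (n + N) - x n‖ + |lam (n + N + 1) - lam (n + 1)| * M := by
        grw [hM n]

end Halpern

theorem stmt_13_general {X : Type*} [NormedAddCommGroup X] [InnerProductSpace ℝ X]
    (N : ℕ) (hN : 1 ≤ N) (C : Set X) (hC : Convex ℝ C)
    (T : ℕ → X → X)
    (hTmap : ∀ i, 1 ≤ i → i ≤ N → Set.MapsTo (T i) C C)
    (hTne : ∀ i, 1 ≤ i → i ≤ N → ∀ x ∈ C, ∀ y ∈ C, ‖T i x - T i y‖ ≤ ‖x - y‖)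
    (hcyc : ∀ n, 1 ≤ n → T n = T ((n - 1) % N + 1))
    (lam : ℕ → ℝ) (hlam : ∀ n, 1 ≤ n → lam n ∈ Set.Icc (0 : ℝ) 1)
    (hlam0 : Filter.Tendsto lam Filter.atTop (nhds 0))
    (hsum : Summable (fun n : ℕ => |lam (n + 1 + N) - lam (n + 1)|))
    (hdiv : Filter.Tendsto (fun m : ℕ => ∑ n ∈ Finset.Icc 1 m, lam n)
      Filter.atTop Filter.atTop)
    (u : X) (hu : u ∈ C) (x : ℕ → X) (hx0 : x 0 = u)
    (hx : ∀ n : ℕ, x (n + 1) = lam (n + 1) • u + (1 - lam (n + 1)) • T (n + 1) (x n))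
    (hbdd : Bornology.IsBounded (Set.range x)) :
    Filter.Tendsto (fun n : ℕ => ‖x n - iterComp T n N (x n)‖)
      Filter.atTop (nhds 0) := by
  have hT : ∀ n, T (n + 1) = T (n % N + 1) := fun n => by simpa using hcyc (n + 1) n.succ_pos
  have hmod : ∀ n, 1 ≤ n % N + 1 ∧ n % N + 1 ≤ N := fun n => ⟨by omega, Nat.mod_lt n hN⟩
  have hTmap' : ∀ n, Set.MapsTo (T (n + 1)) C C := fun n => hT n ▸ hTmap _ (hmod n).1 (hmod n).2
  have hTne' : ∀ n, ∀ y ∈ C, ∀ z ∈ C, ‖T (n + 1) y - T (n + 1) z‖ ≤ ‖y - z‖ :=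
    fun n => hT n ▸ hTne _ (hmod n).1 (hmod n).2
  have hlam' : ∀ n, lam (n + 1) ∈ Set.Icc (0 : ℝ) 1 := fun n => hlam _ n.succ_pos
  have hmem := halpern_mem hC hu hTmap' hlam' hx0 hx
  have hTu := (finite_range_of_eq_mod (f := fun n => T (n + 1) u) hN
    fun n => congrFun (hT n) u).isBounded
  obtain ⟨M, hM⟩ := exists_norm_sub_map_halpern_le hu hmem hTne' hTu hbdd
  have hdiv' : ¬Summable fun n => lam (n + 1) := fun hs =>
    not_tendsto_atTop_of_tendsto_nhds hs.hasSum.tendsto_sum_nat <| hdiv.congr fun m => by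
      rw [range_eq_Ico, sum_Ico_add', zero_add, Ico_add_one_right_eq_Icc]
  have hshift := tendsto_norm_halpern_add_sub hmem hTne'
    (fun n => by rw [hT, hT n, Nat.add_mod_right]) hlam' hM
    (by simpa only [Nat.add_right_comm _ 1 N] using hsum) hdiv' hx
  have hlamsum : Tendsto (fun n => M * ∑ j ∈ range N, lam (n + j + 1)) atTop (𝓝 0) := by
    simpa [add_assoc] using
      (tendsto_finsetSum (range N) fun j _ => hlam0.comp (tendsto_add_atTop_nat (j + 1))).const_mul M
  refine squeeze_zero (fun n => norm_nonneg _) (fun n => ?_) (by simpa using hshift.add hlamsum)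
  calc ‖x n - iterComp T n N (x n)‖ ≤ ‖x (n + N) - x n‖ + ‖x (n + N) - iterComp T n N (x n)‖ := by
        rw [norm_sub_rev (x (n + N))]; exact norm_sub_le_norm_sub_add_norm_sub _ _ _
    _ ≤ ‖x (n + N) - x n‖ + M * ∑ j ∈ range N, lam (n + j + 1) := by
        grw [norm_halpern_sub_iterComp_le hmem hTmap' hTne' (fun n => (hlam' n).1) hM hx]

/-- Asymptotic regularity of the cyclic Halpern iteration in a real Hilbert space
(Bauschke): if `λ_n → 0`, `∑ |λ_{n+N} - λ_n| < ∞`, `∑ λ_n = ∞` and `(x_n)` is bounded,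
then `‖x n - T_{n+N}⋯T_{n+1} (x n)‖ → 0`. -/
theorem stmt_13 {X : Type*} [NormedAddCommGroup X] [InnerProductSpace ℝ X]
    [CompleteSpace X]
    (N : ℕ) (hN : 1 ≤ N) (C : Set X) (hC : Convex ℝ C)
    (T : ℕ → X → X)
    (hTmap : ∀ i, 1 ≤ i → i ≤ N → Set.MapsTo (T i) C C)
    (hTne : ∀ i, 1 ≤ i → i ≤ N → ∀ x ∈ C, ∀ y ∈ C, ‖T i x - T i y‖ ≤ ‖x - y‖)
    (hcyc : ∀ n, 1 ≤ n → T n = T ((n - 1) % N + 1))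
    (lam : ℕ → ℝ) (hlam : ∀ n, 1 ≤ n → lam n ∈ Set.Icc (0 : ℝ) 1)
    (hlam0 : Filter.Tendsto lam Filter.atTop (nhds 0))
    (hsum : Summable (fun n : ℕ => |lam (n + 1 + N) - lam (n + 1)|))
    (hdiv : Filter.Tendsto (fun m : ℕ => ∑ n ∈ Finset.Icc 1 m, lam n)
      Filter.atTop Filter.atTop)
    (u : X) (hu : u ∈ C) (x : ℕ → X) (hx0 : x 0 = u)
    (hx : ∀ n : ℕ, x (n + 1) = lam (n + 1) • u + (1 - lam (n + 1)) • T (n + 1) (x n))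
    (hbdd : Bornology.IsBounded (Set.range x)) :
    Filter.Tendsto (fun n : ℕ => ‖x n - iterComp T n N (x n)‖)
      Filter.atTop (nhds 0) :=
  stmt_13_general N hN C hC T hTmap hTne hcyc lam hlam hlam0 hsum hdiv u hu x hx0 hx hbdd
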